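/- arXiv:1107.5637 — 6 statements merged into one kernel-verified Lean document; each statement's English description precedes it below -/
import Mathlib

section
/- The partial mutual information function ι(c,b) (as defined from the four log terms) is convex on the rectangle F = [0,C] × [0,B]: for any (c',b'), (c'',b'') in F and θ ∈ [0,1], ι(θc'+(1−θ)c'', θb'+(1−θ)b'') ≤ θ·ι(c',b') + (1−θ)·ι(c'',b''). -/
/-!
Writing `g x y = x log (x / (x + y)) + y log (y / (x + y))`, we have
`ι(c, b) = g c b + g (C - c) (B - b) - C log p₁ - B log p₂`. The function `g` is positively
homogeneous of degree one, and the two-term log-sum inequality makes it subadditive on the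
closed quadrant; together these give its convexity, and `ι` is `g` plus `g` composed with the
affine map `(c, b) ↦ (C - c, B - b)`, up to a constant.
-/

open Real

/-- The two-output partial mutual information function. -/
noncomputable def iota (p₁ p₂ C B c b : ℝ) : ℝ :=
  c * Real.log (c / (c + b)) + b * Real.log (b / (c + b))
  + (C - c) * Real.log ((C - c) / ((C - c) + (B - b)))
  + (B - b) * Real.log ((B - b) / ((C - c) + (B - b)))
  - C * Real.log p₁ - B * Real.log p₂

open Set

theorem add_mul_log_div_add_le {a b A B : ℝ} (ha : 0 ≤ a) (hb : 0 ≤ b) (hA : 0 < A) (hB : 0 < B) :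
    (a + b) * log ((a + b) / (A + B)) ≤ a * log (a / A) + b * log (b / B) := by
  have hAB : 0 < A + B := add_pos hA hB
  -- Jensen for `x ↦ x log x` at `a / A`, `b / B` with weights `A / (A + B)`, `B / (A + B)`
  have jensen := convexOn_mul_log.2 (mem_Ici.2 (div_nonneg ha hA.le))
    (mem_Ici.2 (div_nonneg hb hB.le)) (div_nonneg hA.le hAB.le) (div_nonneg hB.le hAB.le)
    (by field_simp)
  have mean : A / (A + B) * (a / A) + B / (A + B) * (b / B) = (a + b) / (A + B) := by
    rw [div_mul_div_comm, div_mul_div_comm, mul_comm A, mul_comm B,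
      mul_div_mul_right _ _ hA.ne', mul_div_mul_right _ _ hB.ne', add_div]
  simp only [smul_eq_mul, mean] at jensen
  calc (a + b) * log ((a + b) / (A + B))
      = (A + B) * ((a + b) / (A + B) * log ((a + b) / (A + B))) := by field_simp
    _ ≤ (A + B) * (A / (A + B) * (a / A * log (a / A)) + B / (A + B) * (b / B * log (b / B))) :=
        mul_le_mul_of_nonneg_left jensen hAB.le
    _ = a * log (a / A) + b * log (b / B) := by field_simp

noncomputable def pairNegEntropy (x y : ℝ) : ℝ :=
  x * log (x / (x + y)) + y * log (y / (x + y))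

theorem pairNegEntropy_mul_mul (t x y : ℝ) :
    pairNegEntropy (t * x) (t * y) = t * pairNegEntropy x y := by
  rcases eq_or_ne t 0 with rfl | ht
  · simp [pairNegEntropy]
  · simp only [pairNegEntropy, ← mul_add, mul_div_mul_left _ _ ht]
    ring

theorem pairNegEntropy_add_le {x₁ y₁ x₂ y₂ : ℝ} (hx₁ : 0 ≤ x₁) (hy₁ : 0 ≤ y₁) (hx₂ : 0 ≤ x₂)
    (hy₂ : 0 ≤ y₂) :
    pairNegEntropy (x₁ + x₂) (y₁ + y₂) ≤ pairNegEntropy x₁ y₁ + pairNegEntropy x₂ y₂ := by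
  rcases (add_nonneg hx₁ hy₁).eq_or_lt with h₁ | h₁
  · obtain ⟨rfl, rfl⟩ : x₁ = 0 ∧ y₁ = 0 := ⟨by linarith, by linarith⟩
    simp [pairNegEntropy]
  rcases (add_nonneg hx₂ hy₂).eq_or_lt with h₂ | h₂
  · obtain ⟨rfl, rfl⟩ : x₂ = 0 ∧ y₂ = 0 := ⟨by linarith, by linarith⟩
    simp [pairNegEntropy]
  have hx := add_mul_log_div_add_le hx₁ hx₂ h₁ h₂
  have hy := add_mul_log_div_add_le hy₁ hy₂ h₁ h₂
  have hsum : x₁ + y₁ + (x₂ + y₂) = x₁ + x₂ + (y₁ + y₂) := by ring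
  rw [hsum] at hx hy
  unfold pairNegEntropy
  linarith

theorem convexOn_pairNegEntropy :
    ConvexOn ℝ (Ici 0 ×ˢ Ici 0) fun p : ℝ × ℝ ↦ pairNegEntropy p.1 p.2 := by
  refine ⟨(convex_Ici 0).prod (convex_Ici 0), ?_⟩
  rintro ⟨x₁, y₁⟩ ⟨hx₁, hy₁⟩ ⟨x₂, y₂⟩ ⟨hx₂, hy₂⟩ s t hs ht -
  simp only [mem_Ici] at hx₁ hy₁ hx₂ hy₂
  simp only [Prod.smul_mk, Prod.mk_add_mk, smul_eq_mul]
  rw [← pairNegEntropy_mul_mul s, ← pairNegEntropy_mul_mul t]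
  exact pairNegEntropy_add_le (by positivity) (by positivity) (by positivity) (by positivity)

theorem iota_eq_pairNegEntropy (p₁ p₂ C B c b : ℝ) :
    iota p₁ p₂ C B c b
      = pairNegEntropy c b + pairNegEntropy (C - c) (B - b) - C * log p₁ - B * log p₂ := by
  simp only [iota, pairNegEntropy]
  ring

theorem convexOn_iota (p₁ p₂ C B : ℝ) :
    ConvexOn ℝ (Icc 0 C ×ˢ Icc 0 B) fun p : ℝ × ℝ ↦ iota p₁ p₂ C B p.1 p.2 := by
  have hF : Convex ℝ (Icc 0 C ×ˢ Icc 0 B) := (convex_Icc 0 C).prod (convex_Icc 0 B)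
  have hdirect := convexOn_pairNegEntropy.subset
    (prod_mono Icc_subset_Ici_self Icc_subset_Ici_self) hF
  let reflect : ℝ × ℝ →ᵃ[ℝ] ℝ × ℝ := AffineMap.const ℝ (ℝ × ℝ) (C, B) - AffineMap.id ℝ (ℝ × ℝ)
  have hreflect := (convexOn_pairNegEntropy.comp_affineMap reflect).subset
    (by rintro ⟨c, b⟩ ⟨⟨-, hc⟩, -, hb⟩; simpa [reflect] using ⟨hc, hb⟩) hF
  refine ((hdirect.add hreflect).add_const (-(C * log p₁) - B * log p₂)).congr fun p _ ↦ ?_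
  change pairNegEntropy p.1 p.2 + pairNegEntropy (C - p.1) (B - p.2) + (-(C * log p₁) - B * log p₂)
    = iota p₁ p₂ C B p.1 p.2
  rw [iota_eq_pairNegEntropy]
  ring

theorem iota_convex_general (p₁ p₂ C B : ℝ) (c' b' c'' b'' θ : ℝ)
    (hc' : 0 ≤ c') (hc'C : c' ≤ C) (hb' : 0 ≤ b') (hb'B : b' ≤ B)
    (hc'' : 0 ≤ c'') (hc''C : c'' ≤ C) (hb'' : 0 ≤ b'') (hb''B : b'' ≤ B)
    (hθ0 : 0 ≤ θ) (hθ1 : θ ≤ 1) :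
    iota p₁ p₂ C B (θ * c' + (1 - θ) * c'') (θ * b' + (1 - θ) * b'')
      ≤ θ * iota p₁ p₂ C B c' b' + (1 - θ) * iota p₁ p₂ C B c'' b'' := by
  simpa using (convexOn_iota p₁ p₂ C B).2 (x := (c', b')) (y := (c'', b''))
    ⟨⟨hc', hc'C⟩, hb', hb'B⟩ ⟨⟨hc'', hc''C⟩, hb'', hb''B⟩ hθ0 (sub_nonneg.2 hθ1) (by ring)

/-- Convexity of the partial mutual information function on the rectangle
`F = [0,C] × [0,B]`. -/
theorem iota_convex (p₁ p₂ C B : ℝ) (hC : 0 < C) (hC1 : C ≤ 1) (hB : 0 < B) (hB1 : B ≤ 1)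
    (hp₁ : 0 < p₁) (hp₂ : 0 < p₂) (c' b' c'' b'' θ : ℝ)
    (hc' : 0 ≤ c') (hc'C : c' ≤ C) (hb' : 0 ≤ b') (hb'B : b' ≤ B)
    (hc'' : 0 ≤ c'') (hc''C : c'' ≤ C) (hb'' : 0 ≤ b'') (hb''B : b'' ≤ B)
    (hθ0 : 0 ≤ θ) (hθ1 : θ ≤ 1) :
    iota p₁ p₂ C B (θ * c' + (1 - θ) * c'') (θ * b' + (1 - θ) * b'')
      ≤ θ * iota p₁ p₂ C B c' b' + (1 - θ) * iota p₁ p₂ C B c'' b'' :=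
  iota_convex_general p₁ p₂ C B c' b' c'' b'' θ hc' hc'C hb' hb'B hc'' hc''C hb'' hb''B hθ0 hθ1
end

section
/- Equality in the convexity inequality for ι holds for distinct points (c',b') ≠ (c'',b'') and θ ∈ (0,1) if and only if c'/b' = c''/b'' = C/B. -/
/-!
Up to a constant, `ι(c, b) = F(c, b) + F(C - c, B - b)` with
`F(x, y) = x log (x / (x + y)) + y log (y / (x + y))`. The function `F` is positively homogeneous
and, by the log-sum inequality, subadditive on the quadrant, with equality exactly when the two
points are parallel. Hence `ι` is convex, and equality at `θ ∈ (0, 1)` forces both the points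
`(c', b')`, `(c'', b'')` and their complements `(C - c', B - b')`, `(C - c'', B - b'')` to be
parallel: the line through the two distinct points passes through `0` and through `(C, B)`,
i.e. `c' / b' = c'' / b'' = C / B`.
-/

open Real

theorem StrictConvexOn.map_add_eq_iff {𝕜 E β : Type*} [Field 𝕜] [LinearOrder 𝕜]
    [IsStrictOrderedRing 𝕜] [AddCommGroup E] [Module 𝕜 E] [AddCommGroup β] [PartialOrder β]
    [IsOrderedAddMonoid β] [Module 𝕜 β] {s : Set E} {f : E → β} (hf : StrictConvexOn 𝕜 s f)
    {x y : E} {a b : 𝕜} (hx : x ∈ s) (hy : y ∈ s) (ha : 0 < a) (hb : 0 < b) (hab : a + b = 1) :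
    f (a • x + b • y) = a • f x + b • f y ↔ x = y := by
  refine ⟨fun h => by_contra fun hxy => (hf.2 hx hy hxy ha hb hab).ne h, ?_⟩
  rintro rfl
  rw [← add_smul, ← add_smul, hab, one_smul, one_smul]

section LogSum

variable {a₁ a₂ s₁ s₂ : ℝ}

/-- The two-term log-sum inequality is `s₁ + s₂` times Jensen's inequality for `t ↦ t log t`
at `a₁ / s₁`, `a₂ / s₂` with weights `s₁ / (s₁ + s₂)`, `s₂ / (s₁ + s₂)`. -/
theorem add_mul_log_div_add_eq_jensen (hs₁ : 0 < s₁) (hs₂ : 0 < s₂) :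
    (a₁ + a₂) * log ((a₁ + a₂) / (s₁ + s₂)) = (s₁ + s₂) *
        ((s₁ / (s₁ + s₂) * (a₁ / s₁) + s₂ / (s₁ + s₂) * (a₂ / s₂)) *
          log (s₁ / (s₁ + s₂) * (a₁ / s₁) + s₂ / (s₁ + s₂) * (a₂ / s₂))) ∧
    a₁ * log (a₁ / s₁) + a₂ * log (a₂ / s₂) = (s₁ + s₂) *
        (s₁ / (s₁ + s₂) * (a₁ / s₁ * log (a₁ / s₁)) +
          s₂ / (s₁ + s₂) * (a₂ / s₂ * log (a₂ / s₂))) := by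
  have hs : s₁ + s₂ ≠ 0 := (add_pos hs₁ hs₂).ne'
  have hmean : s₁ / (s₁ + s₂) * (a₁ / s₁) + s₂ / (s₁ + s₂) * (a₂ / s₂) = (a₁ + a₂) / (s₁ + s₂) := by
    field_simp
  refine ⟨by rw [hmean]; field_simp, by field_simp⟩

theorem add_mul_log_div_add_le_s9 (ha₁ : 0 ≤ a₁) (ha₂ : 0 ≤ a₂) (hs₁ : 0 < s₁) (hs₂ : 0 < s₂) :
    (a₁ + a₂) * log ((a₁ + a₂) / (s₁ + s₂)) ≤ a₁ * log (a₁ / s₁) + a₂ * log (a₂ / s₂) := by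
  obtain ⟨hl, hr⟩ := add_mul_log_div_add_eq_jensen (a₁ := a₁) (a₂ := a₂) hs₁ hs₂
  rw [hl, hr]
  gcongr
  exact convexOn_mul_log.2 (Set.mem_Ici.2 (div_nonneg ha₁ hs₁.le))
    (Set.mem_Ici.2 (div_nonneg ha₂ hs₂.le)) (by positivity) (by positivity) (by field_simp)

theorem add_mul_log_div_add_eq_iff (ha₁ : 0 ≤ a₁) (ha₂ : 0 ≤ a₂) (hs₁ : 0 < s₁)
    (hs₂ : 0 < s₂) :
    (a₁ + a₂) * log ((a₁ + a₂) / (s₁ + s₂)) = a₁ * log (a₁ / s₁) + a₂ * log (a₂ / s₂) ↔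
      a₁ * s₂ = a₂ * s₁ := by
  obtain ⟨hl, hr⟩ := add_mul_log_div_add_eq_jensen (a₁ := a₁) (a₂ := a₂) hs₁ hs₂
  rw [hl, hr, mul_right_inj' (add_pos hs₁ hs₂).ne', ← smul_eq_mul (s₁ / _), ← smul_eq_mul (s₂ / _),
    ← smul_eq_mul (s₁ / _), ← smul_eq_mul (s₂ / _),
    strictConvexOn_mul_log.map_add_eq_iff (Set.mem_Ici.2 (div_nonneg ha₁ hs₁.le))
      (Set.mem_Ici.2 (div_nonneg ha₂ hs₂.le)) (by positivity) (by positivity) (by field_simp),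
    div_eq_div_iff hs₁.ne' hs₂.ne']

end LogSum

noncomputable def negEntropyPair (x y : ℝ) : ℝ :=
  x * log (x / (x + y)) + y * log (y / (x + y))

section NegEntropyPair

variable {x₁ y₁ x₂ y₂ : ℝ}

theorem negEntropyPair_mul {t : ℝ} (ht : 0 ≤ t) (x y : ℝ) :
    negEntropyPair (t * x) (t * y) = t * negEntropyPair x y := by
  obtain rfl | ht := ht.eq_or_lt
  · simp [negEntropyPair]
  · simp only [negEntropyPair, ← mul_add, mul_div_mul_left _ _ ht.ne']
    ring

theorem negEntropyPair_add_le (hx₁ : 0 ≤ x₁) (hy₁ : 0 ≤ y₁) (hx₂ : 0 ≤ x₂) (hy₂ : 0 ≤ y₂) :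
    negEntropyPair (x₁ + x₂) (y₁ + y₂) ≤ negEntropyPair x₁ y₁ + negEntropyPair x₂ y₂ := by
  obtain h₁ | h₁ := (add_nonneg hx₁ hy₁).eq_or_lt
  · obtain ⟨rfl, rfl⟩ := (add_eq_zero_iff_of_nonneg hx₁ hy₁).1 h₁.symm
    simp [negEntropyPair]
  obtain h₂ | h₂ := (add_nonneg hx₂ hy₂).eq_or_lt
  · obtain ⟨rfl, rfl⟩ := (add_eq_zero_iff_of_nonneg hx₂ hy₂).1 h₂.symm
    simp [negEntropyPair]
  have hsum : x₁ + x₂ + (y₁ + y₂) = x₁ + y₁ + (x₂ + y₂) := by ring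
  have hx := add_mul_log_div_add_le_s9 hx₁ hx₂ h₁ h₂
  have hy := add_mul_log_div_add_le_s9 hy₁ hy₂ h₁ h₂
  unfold negEntropyPair
  rw [hsum]
  linarith

theorem negEntropyPair_add_eq_iff (hx₁ : 0 ≤ x₁) (hy₁ : 0 ≤ y₁) (hx₂ : 0 ≤ x₂)
    (hy₂ : 0 ≤ y₂) :
    negEntropyPair (x₁ + x₂) (y₁ + y₂) = negEntropyPair x₁ y₁ + negEntropyPair x₂ y₂ ↔
      x₁ * y₂ = x₂ * y₁ := by
  obtain h₁ | h₁ := (add_nonneg hx₁ hy₁).eq_or_lt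
  · obtain ⟨rfl, rfl⟩ := (add_eq_zero_iff_of_nonneg hx₁ hy₁).1 h₁.symm
    simp [negEntropyPair]
  obtain h₂ | h₂ := (add_nonneg hx₂ hy₂).eq_or_lt
  · obtain ⟨rfl, rfl⟩ := (add_eq_zero_iff_of_nonneg hx₂ hy₂).1 h₂.symm
    simp [negEntropyPair]
  have hsum : x₁ + x₂ + (y₁ + y₂) = x₁ + y₁ + (x₂ + y₂) := by ring
  unfold negEntropyPair
  rw [hsum, add_add_add_comm (x₁ * _),
    add_eq_add_iff_eq_and_eq (add_mul_log_div_add_le_s9 hx₁ hx₂ h₁ h₂)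
      (add_mul_log_div_add_le_s9 hy₁ hy₂ h₁ h₂),
    add_mul_log_div_add_eq_iff hx₁ hx₂ h₁ h₂, add_mul_log_div_add_eq_iff hy₁ hy₂ h₁ h₂]
  constructor
  · rintro ⟨h, -⟩
    linear_combination h
  · intro h
    exact ⟨by linear_combination h, by linear_combination -h⟩

variable {θ : ℝ}

theorem negEntropyPair_convexComb_le (hx₁ : 0 ≤ x₁) (hy₁ : 0 ≤ y₁) (hx₂ : 0 ≤ x₂)
    (hy₂ : 0 ≤ y₂) (hθ₀ : 0 ≤ θ) (hθ₁ : θ ≤ 1) :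
    negEntropyPair (θ * x₁ + (1 - θ) * x₂) (θ * y₁ + (1 - θ) * y₂) ≤
      θ * negEntropyPair x₁ y₁ + (1 - θ) * negEntropyPair x₂ y₂ := by
  have hθ : 0 ≤ 1 - θ := sub_nonneg.2 hθ₁
  rw [← negEntropyPair_mul hθ₀, ← negEntropyPair_mul hθ]
  exact negEntropyPair_add_le (by positivity) (by positivity) (by positivity) (by positivity)

theorem negEntropyPair_convexComb_eq_iff (hx₁ : 0 ≤ x₁) (hy₁ : 0 ≤ y₁) (hx₂ : 0 ≤ x₂)
    (hy₂ : 0 ≤ y₂) (hθ₀ : 0 < θ) (hθ₁ : θ < 1) :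
    negEntropyPair (θ * x₁ + (1 - θ) * x₂) (θ * y₁ + (1 - θ) * y₂) =
        θ * negEntropyPair x₁ y₁ + (1 - θ) * negEntropyPair x₂ y₂ ↔
      x₁ * y₂ = x₂ * y₁ := by
  have hθ : 0 < 1 - θ := sub_pos.2 hθ₁
  rw [← negEntropyPair_mul hθ₀.le, ← negEntropyPair_mul hθ.le,
    negEntropyPair_add_eq_iff (by positivity) (by positivity) (by positivity) (by positivity),
    mul_mul_mul_comm, mul_mul_mul_comm (1 - θ), mul_comm (1 - θ) θ]
  exact mul_right_inj' (mul_pos hθ₀ hθ).ne'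

end NegEntropyPair

theorem iota_eq_negEntropyPair (p₁ p₂ C B c b : ℝ) :
    iota p₁ p₂ C B c b =
      negEntropyPair c b + negEntropyPair (C - c) (B - b) - C * log p₁ - B * log p₂ := by
  unfold iota negEntropyPair
  ring

theorem iota_convexComb_eq_iff (p₁ p₂ : ℝ) {C B c' b' c'' b'' θ : ℝ} (hc' : 0 ≤ c')
    (hc'C : c' ≤ C) (hb' : 0 ≤ b') (hb'B : b' ≤ B) (hc'' : 0 ≤ c'') (hc''C : c'' ≤ C)
    (hb'' : 0 ≤ b'') (hb''B : b'' ≤ B) (hθ₀ : 0 < θ) (hθ₁ : θ < 1) :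
    iota p₁ p₂ C B (θ * c' + (1 - θ) * c'') (θ * b' + (1 - θ) * b'')
        = θ * iota p₁ p₂ C B c' b' + (1 - θ) * iota p₁ p₂ C B c'' b'' ↔
      c' * b'' = c'' * b' ∧ (C - c') * (B - b'') = (C - c'') * (B - b') := by
  have hcompl (X x' x'' : ℝ) :
      X - (θ * x' + (1 - θ) * x'') = θ * (X - x') + (1 - θ) * (X - x'') := by
    ring
  have hC' := sub_nonneg.2 hc'C
  have hB' := sub_nonneg.2 hb'B
  have hC'' := sub_nonneg.2 hc''C
  have hB'' := sub_nonneg.2 hb''B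
  rw [← negEntropyPair_convexComb_eq_iff hc' hb' hc'' hb'' hθ₀ hθ₁,
    ← negEntropyPair_convexComb_eq_iff hC' hB' hC'' hB'' hθ₀ hθ₁,
    ← add_eq_add_iff_eq_and_eq (negEntropyPair_convexComb_le hc' hb' hc'' hb'' hθ₀.le hθ₁.le)
      (negEntropyPair_convexComb_le hC' hB' hC'' hB'' hθ₀.le hθ₁.le)]
  simp only [iota_eq_negEntropyPair, hcompl]
  constructor <;> intro h <;> linarith

theorem cross_mul_eq_and_cross_mul_sub_eq_iff {C B c' b' c'' b'' : ℝ} (hB : B ≠ 0)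
    (hb' : b' ≠ 0) (hb'' : b'' ≠ 0) (hne : (c', b') ≠ (c'', b'')) :
    c' * b'' = c'' * b' ∧ (C - c') * (B - b'') = (C - c'') * (B - b') ↔
      c' / b' = C / B ∧ c'' / b'' = C / B := by
  rw [div_eq_div_iff hb' hB, div_eq_div_iff hb'' hB]
  constructor
  · rintro ⟨h₁, h₂⟩
    have hb : b' - b'' ≠ 0 := by
      refine sub_ne_zero.2 fun hb => hne ?_
      rw [hb, mul_right_cancel₀ hb'' (h₁.trans (by rw [hb]))]
    constructor
    · apply mul_left_cancel₀ hb
      linear_combination -b' * h₂ + (b' - B) * h₁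
    · apply mul_left_cancel₀ hb
      linear_combination -b'' * h₂ + (b'' - B) * h₁
  · rintro ⟨h₁, h₂⟩
    constructor
    · apply mul_left_cancel₀ hB
      linear_combination b'' * h₁ - b' * h₂
    · apply mul_left_cancel₀ hB
      linear_combination (b'' - B) * h₁ + (B - b') * h₂

theorem iota_convex_eq_iff_general (p₁ p₂ C B : ℝ) (c' b' c'' b'' θ : ℝ)
    (hc' : 0 ≤ c') (hc'C : c' ≤ C) (hb' : 0 < b') (hb'B : b' ≤ B)
    (hc'' : 0 ≤ c'') (hc''C : c'' ≤ C) (hb'' : 0 < b'') (hb''B : b'' ≤ B)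
    (hne : (c', b') ≠ (c'', b'')) (hθ0 : 0 < θ) (hθ1 : θ < 1) :
    iota p₁ p₂ C B (θ * c' + (1 - θ) * c'') (θ * b' + (1 - θ) * b'')
        = θ * iota p₁ p₂ C B c' b' + (1 - θ) * iota p₁ p₂ C B c'' b''
      ↔ c' / b' = C / B ∧ c'' / b'' = C / B := by
  rw [iota_convexComb_eq_iff p₁ p₂ hc' hc'C hb'.le hb'B hc'' hc''C hb''.le hb''B hθ0 hθ1]
  exact cross_mul_eq_and_cross_mul_sub_eq_iff (hb'.trans_le hb'B).ne' hb'.ne' hb''.ne' hne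

/-- Equality in the convexity inequality for `ι`, for distinct points and `θ ∈ (0,1)`,
holds if and only if `c'/b' = c''/b'' = C/B`. -/
theorem iota_convex_eq_iff (p₁ p₂ C B : ℝ) (hC : 0 < C) (hC1 : C ≤ 1) (hB : 0 < B)
    (hB1 : B ≤ 1) (hp₁ : 0 < p₁) (hp₂ : 0 < p₂) (c' b' c'' b'' θ : ℝ)
    (hc' : 0 ≤ c') (hc'C : c' ≤ C) (hb' : 0 < b') (hb'B : b' ≤ B)
    (hc'' : 0 ≤ c'') (hc''C : c'' ≤ C) (hb'' : 0 < b'') (hb''B : b'' ≤ B)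
    (hne : (c', b') ≠ (c'', b'')) (hθ0 : 0 < θ) (hθ1 : θ < 1) :
    iota p₁ p₂ C B (θ * c' + (1 - θ) * c'') (θ * b' + (1 - θ) * b'')
        = θ * iota p₁ p₂ C B c' b' + (1 - θ) * iota p₁ p₂ C B c'' b''
      ↔ c' / b' = C / B ∧ c'' / b'' = C / B :=
  iota_convex_eq_iff_general p₁ p₂ C B c' b' c'' b'' θ hc' hc'C hb' hb'B hc'' hc''C hb'' hb''B hne
    hθ0 hθ1
end

section
/- For all (c,b) in [0,C] × [0,B], ι(c,b) ≥ C·log(C/(C+B)) + B·log(B/(C+B)) − C·log p₁ − B·log p₂, with equality if and only if c/C = b/B. -/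
/-!
The bound is the two-term log-sum inequality
`(a + b) log ((a + b) / (x + y)) ≤ a log (a / x) + b log (b / y)`, applied to the pair `c, C - c`
and to the pair `b, B - b`, both against the column sums `c + b` and `(C - c) + (B - b)`, which add
up to `C + B`. The log-sum inequality is subadditivity of the perspective `x f (a / x)` of the
strictly convex `f t = t log t`, with equality iff `a / x = b / y`; for both pairs this
proportionality reads `c B = C b`.
-/

open Real

section Perspective

variable {s : Set ℝ} {f : ℝ → ℝ} {a b x y : ℝ}

lemma add_div_add_eq_smul_div_add_smul_div (hx : 0 < x) (hy : 0 < y) :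
    (a + b) / (x + y) = (x / (x + y)) • (a / x) + (y / (x + y)) • (b / y) := by
  simp only [smul_eq_mul]
  field_simp

lemma ConvexOn.mul_apply_add_div_add_le (hf : ConvexOn ℝ s f) (hx : 0 < x) (hy : 0 < y)
    (ha : a / x ∈ s) (hb : b / y ∈ s) :
    (x + y) * f ((a + b) / (x + y)) ≤ x * f (a / x) + y * f (b / y) := by
  have hxy : 0 < x + y := by positivity
  have h := hf.2 ha hb (div_pos hx hxy).le (div_pos hy hxy).le (by rw [← add_div, div_self hxy.ne'])
  rw [← add_div_add_eq_smul_div_add_smul_div hx hy, smul_eq_mul, smul_eq_mul] at h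
  calc (x + y) * f ((a + b) / (x + y))
      ≤ (x + y) * (x / (x + y) * f (a / x) + y / (x + y) * f (b / y)) := by gcongr
    _ = x * f (a / x) + y * f (b / y) := by field_simp

lemma StrictConvexOn.mul_apply_add_div_add_lt (hf : StrictConvexOn ℝ s f) (hx : 0 < x)
    (hy : 0 < y) (ha : a / x ∈ s) (hb : b / y ∈ s) (hab : a / x ≠ b / y) :
    (x + y) * f ((a + b) / (x + y)) < x * f (a / x) + y * f (b / y) := by
  have hxy : 0 < x + y := by positivity
  have h := hf.2 ha hb hab (div_pos hx hxy) (div_pos hy hxy) (by rw [← add_div, div_self hxy.ne'])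
  rw [← add_div_add_eq_smul_div_add_smul_div hx hy, smul_eq_mul, smul_eq_mul] at h
  calc (x + y) * f ((a + b) / (x + y))
      < (x + y) * (x / (x + y) * f (a / x) + y / (x + y) * f (b / y)) := by gcongr
    _ = x * f (a / x) + y * f (b / y) := by field_simp

lemma mul_apply_add_div_add_of_div_eq (f : ℝ → ℝ) (hx : 0 < x) (hy : 0 < y)
    (hab : a / x = b / y) :
    (x + y) * f ((a + b) / (x + y)) = x * f (a / x) + y * f (b / y) := by
  have h : (a + b) / (x + y) = a / x := by
    rw [div_eq_div_iff (by positivity) hx.ne']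
    rw [div_eq_div_iff hx.ne' hy.ne'] at hab
    linarith
  rw [h, ← hab]
  ring

lemma StrictConvexOn.mul_apply_add_div_add_eq_iff (hf : StrictConvexOn ℝ s f) (hx : 0 < x)
    (hy : 0 < y) (ha : a / x ∈ s) (hb : b / y ∈ s) :
    (x + y) * f ((a + b) / (x + y)) = x * f (a / x) + y * f (b / y) ↔ a / x = b / y :=
  ⟨fun h => by_contra fun hab => (hf.mul_apply_add_div_add_lt hx hy ha hb hab).ne h,
    mul_apply_add_div_add_of_div_eq f hx hy⟩

end Perspective

namespace Real

variable {a b x y : ℝ}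

-- Also at `x = 0`, where both sides vanish because `a / 0 = 0`.
lemma mul_div_mul_log_div (a x : ℝ) : x * (a / x * log (a / x)) = a * log (a / x) := by
  rcases eq_or_ne x 0 with rfl | hx
  · simp
  · rw [← mul_assoc, mul_div_cancel₀ a hx]

lemma add_mul_log_div_add_le (ha : 0 ≤ a) (hb : 0 ≤ b) (hx : 0 ≤ x) (hy : 0 ≤ y)
    (hax : x = 0 → a = 0) (hby : y = 0 → b = 0) :
    (a + b) * log ((a + b) / (x + y)) ≤ a * log (a / x) + b * log (b / y) := by
  rcases hx.eq_or_lt with rfl | hx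
  · simp [hax rfl]
  rcases hy.eq_or_lt with rfl | hy
  · simp [hby rfl]
  simpa only [mul_div_mul_log_div] using strictConvexOn_mul_log.convexOn.mul_apply_add_div_add_le
    hx hy (Set.mem_Ici.2 (div_nonneg ha hx.le)) (Set.mem_Ici.2 (div_nonneg hb hy.le))

lemma add_mul_log_div_add_eq_iff (ha : 0 ≤ a) (hb : 0 ≤ b) (hx : 0 ≤ x) (hy : 0 ≤ y)
    (hax : x = 0 → a = 0) (hby : y = 0 → b = 0) :
    (a + b) * log ((a + b) / (x + y)) = a * log (a / x) + b * log (b / y) ↔ a * y = b * x := by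
  rcases hx.eq_or_lt with rfl | hx
  · simp [hax rfl]
  rcases hy.eq_or_lt with rfl | hy
  · simp [hby rfl]
  rw [← div_eq_div_iff hx.ne' hy.ne']
  simpa only [mul_div_mul_log_div] using strictConvexOn_mul_log.mul_apply_add_div_add_eq_iff
    hx hy (Set.mem_Ici.2 (div_nonneg ha hx.le)) (Set.mem_Ici.2 (div_nonneg hb hy.le))

end Real

section Rows

variable {C B c b : ℝ}

lemma mul_log_div_add_le_row (hc0 : 0 ≤ c) (hcC : c ≤ C) (hb0 : 0 ≤ b) (hbB : b ≤ B) :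
    C * log (C / (C + B))
      ≤ c * log (c / (c + b)) + (C - c) * log ((C - c) / ((C - c) + (B - b))) := by
  have h := add_mul_log_div_add_le hc0 (sub_nonneg.2 hcC) (add_nonneg hc0 hb0)
    (y := (C - c) + (B - b)) (by linarith) (fun _ => by linarith) (fun _ => by linarith)
  rwa [add_sub_cancel, show c + b + (C - c + (B - b)) = C + B by ring] at h

lemma mul_log_div_add_eq_row_iff (hc0 : 0 ≤ c) (hcC : c ≤ C) (hb0 : 0 ≤ b) (hbB : b ≤ B) :
    C * log (C / (C + B))
        = c * log (c / (c + b)) + (C - c) * log ((C - c) / ((C - c) + (B - b)))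
      ↔ c * B = C * b := by
  have h := add_mul_log_div_add_eq_iff hc0 (sub_nonneg.2 hcC) (add_nonneg hc0 hb0)
    (y := (C - c) + (B - b)) (by linarith) (fun _ => by linarith) (fun _ => by linarith)
  rw [add_sub_cancel, show c + b + (C - c + (B - b)) = C + B by ring] at h
  rw [h]
  constructor <;> intro h <;> linarith

end Rows

theorem iota_lower_bound_general (p₁ p₂ C B : ℝ) (hC : 0 < C) (hB : 0 < B) (c b : ℝ)
    (hc0 : 0 ≤ c) (hcC : c ≤ C) (hb0 : 0 ≤ b) (hbB : b ≤ B) :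
    (C * Real.log (C / (C + B)) + B * Real.log (B / (C + B))
        - C * Real.log p₁ - B * Real.log p₂ ≤ iota p₁ p₂ C B c b)
    ∧ (iota p₁ p₂ C B c b
        = C * Real.log (C / (C + B)) + B * Real.log (B / (C + B))
          - C * Real.log p₁ - B * Real.log p₂ ↔ c / C = b / B) := by
  have hC_le := mul_log_div_add_le_row hc0 hcC hb0 hbB
  have hC_eq := mul_log_div_add_eq_row_iff hc0 hcC hb0 hbB
  have hB_le := mul_log_div_add_le_row hb0 hbB hc0 hcC
  have hB_eq := mul_log_div_add_eq_row_iff hb0 hbB hc0 hcC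
  rw [add_comm B C, add_comm b c, add_comm (B - b)] at hB_le hB_eq
  rw [div_eq_div_iff hC.ne' hB.ne', mul_comm b C]
  unfold iota
  refine ⟨by linarith, fun h => ?_, fun h => ?_⟩
  · exact hC_eq.1 (by linarith)
  · linarith [hC_eq.2 h, hB_eq.2 (by linarith)]

/-- Lower bound on the partial mutual information over the rectangle `[0,C] × [0,B]`,
with equality if and only if `c/C = b/B`. -/
theorem iota_lower_bound (p₁ p₂ C B : ℝ) (hC : 0 < C) (hC1 : C ≤ 1) (hB : 0 < B)
    (hB1 : B ≤ 1) (hp₁ : 0 < p₁) (hp₂ : 0 < p₂) (c b : ℝ)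
    (hc0 : 0 ≤ c) (hcC : c ≤ C) (hb0 : 0 ≤ b) (hbB : b ≤ B) :
    (C * Real.log (C / (C + B)) + B * Real.log (B / (C + B))
        - C * Real.log p₁ - B * Real.log p₂ ≤ iota p₁ p₂ C B c b)
    ∧ (iota p₁ p₂ C B c b
        = C * Real.log (C / (C + B)) + B * Real.log (B / (C + B))
          - C * Real.log p₁ - B * Real.log p₂ ↔ c / C = b / B) :=
  iota_lower_bound_general p₁ p₂ C B hC hB c b hc0 hcC hb0 hbB
end

section
/- For I' = 3 channel outputs with c₁/b₁ < c₂/b₂ < c₃/b₃ (all cᵢ, bᵢ > 0), the odd-even assignment grouping outputs {1,3} versus {2} yields strictly smaller partial mutual information than the better of the two consecutive assignments: ι(c₂,b₂) < max( ι(c₁,b₁), ι(c₃,b₃) ). -/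
open Real

/-- Partial mutual information of a two-set assignment with totals `C`, `B`
(without the constant input-distribution terms). -/
noncomputable def iota0 (C B c b : ℝ) : ℝ :=
  c * Real.log (c / (c + b)) + b * Real.log (b / (c + b))
  + (C - c) * Real.log ((C - c) / ((C - c) + (B - b)))
  + (B - b) * Real.log ((B - b) / ((C - c) + (B - b)))

/-!
Write `g(c, b) = c log (c/(c+b)) + b log (b/(c+b))` (`iotaTerm`), so that `ι` is `g` of a set plus
`g` of its complement, and let `D` be the binary relative entropy (`binKL`). For every reference
proportion `t`, `g(c, b) = c log t + b log (1-t) + (c+b) D(c/(c+b) ‖ t)`, whose first two terms are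
linear in `(c, b)`. Write `pᵢ`, `p₁₃`, `p₂₃` for the proportions `c/(c+b)` and `mᵢ`, `m₂₃` for the
masses `c+b` of the corresponding groups. Using the reference `p₁₃` for `g₁, g₃, g₁₃` and the
reference `p₂` for `g₂, g₃, g₂₃`, the linear terms cancel and
`ι(c₁,b₁) - ι(c₂,b₂) = m₁ D(p₁‖p₁₃) + m₃ D(p₃‖p₁₃) - m₃ D(p₃‖p₂) + m₂₃ D(p₂₃‖p₂)`.
If `p₁₃ ≤ p₂`, then `p₁₃ ≤ p₂ < p₃` gives `D(p₃‖p₂) ≤ D(p₃‖p₁₃)` and `p₂ < p₂₃` makes the last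
term positive. If `p₂ < p₁₃`, the same argument applies after exchanging outputs `1` and `3`
together with the roles of `c` and `b`, which preserves the ordering of the ratios.
-/

noncomputable def binKL (x y : ℝ) : ℝ :=
  x * log (x / y) + (1 - x) * log ((1 - x) / (1 - y))

lemma sub_le_mul_log_div {x y : ℝ} (hx : 0 < x) (hy : 0 < y) : x - y ≤ x * log (x / y) := by
  have h := mul_le_mul_of_nonneg_left (log_le_sub_one_of_pos (div_pos hy hx)) hx.le
  rw [mul_sub, mul_div_cancel₀ _ hx.ne', mul_one, ← inv_div, log_inv] at h
  linarith

lemma sub_lt_mul_log_div {x y : ℝ} (hx : 0 < x) (hy : 0 < y) (hxy : x ≠ y) :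
    x - y < x * log (x / y) := by
  have h := mul_lt_mul_of_pos_left
    (log_lt_sub_one_of_pos (div_pos hy hx) (by rwa [ne_eq, div_eq_one_iff_eq hx.ne', eq_comm])) hx
  rw [mul_sub, mul_div_cancel₀ _ hx.ne', mul_one, ← inv_div, log_inv] at h
  linarith

lemma binKL_self (x : ℝ) : binKL x x = 0 := by
  simp [binKL]

lemma binKL_nonneg {x y : ℝ} (hx₀ : 0 < x) (hx₁ : x < 1) (hy₀ : 0 < y) (hy₁ : y < 1) :
    0 ≤ binKL x y := by
  have := sub_le_mul_log_div hx₀ hy₀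
  have := sub_le_mul_log_div (sub_pos.2 hx₁) (sub_pos.2 hy₁)
  unfold binKL
  linarith

lemma binKL_pos {x y : ℝ} (hx₀ : 0 < x) (hx₁ : x < 1) (hy₀ : 0 < y) (hy₁ : y < 1)
    (hxy : x ≠ y) : 0 < binKL x y := by
  have := sub_lt_mul_log_div hx₀ hy₀ hxy
  have := sub_le_mul_log_div (sub_pos.2 hx₁) (sub_pos.2 hy₁)
  unfold binKL
  linarith

lemma binKL_le_binKL_of_le_of_le {x s t : ℝ} (ht₀ : 0 < t) (hts : t ≤ s) (hsx : s ≤ x)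
    (hx₁ : x < 1) : binKL x s ≤ binKL x t := by
  have hs₀ : 0 < s := ht₀.trans_le hts
  have hs₁ : 0 < 1 - s := by linarith
  have ht₁ : 0 < 1 - t := by linarith
  have three_point : binKL x t = binKL x s + binKL s t
      + (x - s) * (log s - log t - log (1 - s) + log (1 - t)) := by
    have hx₀ : 0 < x := hs₀.trans_le hsx
    have hx₁' : 0 < 1 - x := by linarith
    simp only [binKL, log_div hx₀.ne' ht₀.ne', log_div hx₀.ne' hs₀.ne', log_div hs₀.ne' ht₀.ne',
      log_div hx₁'.ne' ht₁.ne', log_div hx₁'.ne' hs₁.ne', log_div hs₁.ne' ht₁.ne']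
    ring
  have hlog : 0 ≤ log s - log t - log (1 - s) + log (1 - t) := by
    have hst := log_le_log ht₀ hts
    have hst' := log_le_log hs₁ (by linarith : 1 - s ≤ 1 - t)
    linarith
  have hst := binKL_nonneg hs₀ (hsx.trans_lt hx₁) ht₀ (by linarith)
  nlinarith [mul_nonneg (sub_nonneg.2 hsx) hlog]

noncomputable def iotaTerm (c b : ℝ) : ℝ :=
  c * log (c / (c + b)) + b * log (b / (c + b))

lemma iotaTerm_comm (c b : ℝ) : iotaTerm c b = iotaTerm b c := by
  rw [iotaTerm, iotaTerm, add_comm b c, add_comm]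

lemma iota0_eq_iotaTerm_add {C B c b c' b' : ℝ} (hC : C = c + c') (hB : B = b + b') :
    iota0 C B c b = iotaTerm c b + iotaTerm c' b' := by
  subst hC hB
  simp only [iota0, iotaTerm, add_sub_cancel_left]
  ring

lemma iota0_swap (C B c b : ℝ) : iota0 B C b c = iota0 C B c b := by
  rw [iota0_eq_iotaTerm_add (c' := B - b) (b' := C - c) (by ring) (by ring),
    iota0_eq_iotaTerm_add (c' := C - c) (b' := B - b) (by ring) (by ring),
    iotaTerm_comm b, iotaTerm_comm (B - b)]

lemma iotaTerm_eq_add_mul_binKL {c b t : ℝ} (hc : 0 < c) (hb : 0 < b) (ht₀ : 0 < t)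
    (ht₁ : t < 1) :
    iotaTerm c b = c * log t + b * log (1 - t) + (c + b) * binKL (c / (c + b)) t := by
  have hm : 0 < c + b := by linarith
  have hcompl : 1 - c / (c + b) = b / (c + b) := by field_simp; ring
  rw [binKL, hcompl, log_div (div_pos hc hm).ne' ht₀.ne',
    log_div (div_pos hb hm).ne' (sub_pos.2 ht₁).ne', mul_add, ← mul_assoc, ← mul_assoc,
    mul_div_cancel₀ _ hm.ne', mul_div_cancel₀ _ hm.ne', iotaTerm]
  ring

lemma div_add_le_div_add_iff {a b c d : ℝ} (hab : 0 < a + b) (hcd : 0 < c + d) :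
    a / (a + b) ≤ c / (c + d) ↔ a * d ≤ c * b := by
  rw [div_le_div_iff₀ hab hcd]
  constructor <;> intro h <;> linarith

lemma div_add_lt_div_add_iff {a b c d : ℝ} (hab : 0 < a + b) (hcd : 0 < c + d) :
    a / (a + b) < c / (c + d) ↔ a * d < c * b := by
  rw [div_lt_div_iff₀ hab hcd]
  constructor <;> intro h <;> linarith

lemma div_add_mem_Ioo {a b : ℝ} (ha : 0 < a) (hb : 0 < b) : a / (a + b) ∈ Set.Ioo 0 1 :=
  ⟨by positivity, (div_lt_one (by positivity)).2 (by linarith)⟩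

lemma iota0_lt_iota0_of_mul_le {C B c₁ b₁ c₂ b₂ c₃ b₃ : ℝ} (hC : C = c₁ + c₂ + c₃)
    (hB : B = b₁ + b₂ + b₃) (hc₁ : 0 < c₁) (hb₁ : 0 < b₁) (hc₂ : 0 < c₂) (hb₂ : 0 < b₂)
    (hc₃ : 0 < c₃) (hb₃ : 0 < b₃) (h23 : c₂ * b₃ < c₃ * b₂)
    (h13 : (c₁ + c₃) * b₂ ≤ c₂ * (b₁ + b₃)) :
    iota0 C B c₂ b₂ < iota0 C B c₁ b₁ := by
  have hc₁₃ := add_pos hc₁ hc₃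
  have hb₁₃ := add_pos hb₁ hb₃
  have hc₂₃ := add_pos hc₂ hc₃
  have hb₂₃ := add_pos hb₂ hb₃
  obtain ⟨hp₁₀, hp₁₁⟩ := div_add_mem_Ioo hc₁ hb₁
  obtain ⟨hp₂₀, hp₂₁⟩ := div_add_mem_Ioo hc₂ hb₂
  obtain ⟨hp₃₀, hp₃₁⟩ := div_add_mem_Ioo hc₃ hb₃
  obtain ⟨hp₁₃₀, hp₁₃₁⟩ := div_add_mem_Ioo hc₁₃ hb₁₃
  obtain ⟨hp₂₃₀, hp₂₃₁⟩ := div_add_mem_Ioo hc₂₃ hb₂₃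
  have hp₁₃_le_p₂ := (div_add_le_div_add_iff (by positivity) (by positivity)).2 h13
  have hp₂_lt_p₃ := (div_add_lt_div_add_iff (by positivity) (by positivity)).2 h23
  have hp₂_lt_p₂₃ : c₂ / (c₂ + b₂) < (c₂ + c₃) / (c₂ + c₃ + (b₂ + b₃)) :=
    (div_add_lt_div_add_iff (by positivity) (by positivity)).2 (by linarith)
  rw [iota0_eq_iotaTerm_add (c' := c₁ + c₃) (b' := b₁ + b₃) (by rw [hC]; ring) (by rw [hB]; ring),
    iota0_eq_iotaTerm_add (c' := c₂ + c₃) (b' := b₂ + b₃) (by rw [hC]; ring) (by rw [hB]; ring)]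
  have g₁ := iotaTerm_eq_add_mul_binKL hc₁ hb₁ hp₁₃₀ hp₁₃₁
  have g₃ := iotaTerm_eq_add_mul_binKL hc₃ hb₃ hp₁₃₀ hp₁₃₁
  have g₁₃ := iotaTerm_eq_add_mul_binKL hc₁₃ hb₁₃ hp₁₃₀ hp₁₃₁
  have g₂ := iotaTerm_eq_add_mul_binKL hc₂ hb₂ hp₂₀ hp₂₁
  have g₃' := iotaTerm_eq_add_mul_binKL hc₃ hb₃ hp₂₀ hp₂₁
  have g₂₃ := iotaTerm_eq_add_mul_binKL hc₂₃ hb₂₃ hp₂₀ hp₂₁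
  rw [binKL_self] at g₁₃ g₂
  have hD₁ := mul_nonneg (add_pos hc₁ hb₁).le (binKL_nonneg hp₁₀ hp₁₁ hp₁₃₀ hp₁₃₁)
  have hD₃ := mul_le_mul_of_nonneg_left
    (binKL_le_binKL_of_le_of_le hp₁₃₀ hp₁₃_le_p₂ hp₂_lt_p₃.le hp₃₁) (add_pos hc₃ hb₃).le
  have hD₂₃ := mul_pos (add_pos hc₂₃ hb₂₃) (binKL_pos hp₂₃₀ hp₂₃₁ hp₂₀ hp₂₁ hp₂_lt_p₂₃.ne')
  linarith

/-- For `I' = 3` sorted outputs, the odd-even assignment `{1,3} | {2}` has strictly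
smaller partial mutual information than the better of the two consecutive assignments:
`ι(c₂,b₂) < max (ι(c₁,b₁), ι(c₃,b₃))`. -/
theorem odd_even_three_suboptimal (c₁ b₁ c₂ b₂ c₃ b₃ : ℝ)
    (hc₁ : 0 < c₁) (hb₁ : 0 < b₁) (hc₂ : 0 < c₂) (hb₂ : 0 < b₂)
    (hc₃ : 0 < c₃) (hb₃ : 0 < b₃)
    (h12 : c₁ / b₁ < c₂ / b₂) (h23 : c₂ / b₂ < c₃ / b₃) :
    iota0 (c₁ + c₂ + c₃) (b₁ + b₂ + b₃) c₂ b₂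
      < max (iota0 (c₁ + c₂ + c₃) (b₁ + b₂ + b₃) c₁ b₁)
          (iota0 (c₁ + c₂ + c₃) (b₁ + b₂ + b₃) c₃ b₃) := by
  rw [div_lt_div_iff₀ hb₁ hb₂] at h12
  rw [div_lt_div_iff₀ hb₂ hb₃] at h23
  rcases le_or_gt ((c₁ + c₃) * b₂) (c₂ * (b₁ + b₃)) with h13 | h13
  · exact lt_max_of_lt_left
      (iota0_lt_iota0_of_mul_le rfl rfl hc₁ hb₁ hc₂ hb₂ hc₃ hb₃ h23 h13)
  · refine lt_max_of_lt_right ?_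
    rw [← iota0_swap _ _ c₂, ← iota0_swap _ _ c₃]
    exact iota0_lt_iota0_of_mul_le (by ring) (by ring) hb₃ hc₃ hb₂ hc₂ hb₁ hc₁
      (by linarith) (by linarith)
end

section
/- For I' = 4 channel outputs with strictly increasing likelihood ratios cᵢ/bᵢ, the odd-even assignment {1,3} versus {2,4} has strictly smaller partial mutual information than at least one consecutive assignment: ι(c₁+c₃, b₁+b₃) < max( ι(c₁,b₁), ι(c₁+c₂, b₁+b₂), ι(c₁+c₂+c₃, b₁+b₂+b₃) ). -/
/-!
Write `ι` of an assignment as the sum over its two cells of the log-likelihood of the cell's outputs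
under the cell's own posterior. By Gibbs' inequality this can only decrease, strictly if the
posteriors differ, when the cells are decoded with other posteriors, so every assignment can be
bounded below using the posteriors `A` of `{1, 3}` and `B` of `{2, 4}`. Output `i` prefers `A` to
`B` according to the sign of an affine function of `cᵢ / bᵢ`, so along `1, 2, 3, 4` the preference
switches at most once. If `3` prefers `B`, compare with `{1} | {2, 3, 4}`; if `2` prefers `A`, with
`{1, 2, 3} | {4}`; otherwise `1` prefers `B` and `4` prefers `A`, and swapping them gives a lower
bound for `{1, 2} | {3, 4}` decoded with `B`, `A`. Strictness comes from the mediant `(c₁ + c₃) /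
(b₁ + b₃)` differing from `c₁ / b₁` (and `(c₂ + c₄) / (b₂ + b₄)` from `c₄ / b₄`) in the first two
cases, and from the strict preferences of `1` and `4` in the last.
-/

open Real

/-- Log-likelihood of outputs with masses `u, v` decoded with the posterior of a cell with masses
`p, q`. -/
noncomputable def cellScore (p q u v : ℝ) : ℝ :=
  u * log (p / (p + q)) + v * log (q / (p + q))

lemma cellScore_add (p q u v u' v' : ℝ) :
    cellScore p q (u + u') (v + v') = cellScore p q u v + cellScore p q u' v' := by
  simp only [cellScore]
  ring

lemma div_lt_add_div_add {a b c d : ℝ} (hb : 0 < b) (hd : 0 < d) (h : a / b < c / d) :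
    a / b < (a + c) / (b + d) := by
  rw [div_lt_div_iff₀ hb hd] at h
  rw [div_lt_div_iff₀ hb (add_pos hb hd)]
  linarith

lemma add_div_add_lt_div {a b c d : ℝ} (hb : 0 < b) (hd : 0 < d) (h : a / b < c / d) :
    (a + c) / (b + d) < c / d := by
  rw [div_lt_div_iff₀ hb hd] at h
  rw [div_lt_div_iff₀ (add_pos hb hd) hd]
  linarith

lemma mul_log_sub_mul_log_le {u s x : ℝ} (hu : 0 < u) (hs : 0 < s) (hx : 0 < x) :
    u * log x - u * log (u / s) ≤ s * x - u := by
  have h := log_le_sub_one_of_pos (show 0 < x / (u / s) by positivity)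
  rw [log_div hx.ne' (by positivity)] at h
  have e : u * (x / (u / s) - 1) = s * x - u := by field_simp
  linarith [mul_le_mul_of_nonneg_left h hu.le]

lemma mul_log_sub_mul_log_lt {u s x : ℝ} (hu : 0 < u) (hs : 0 < s) (hx : 0 < x)
    (hne : x ≠ u / s) : u * log x - u * log (u / s) < s * x - u := by
  have h := log_lt_sub_one_of_pos (show 0 < x / (u / s) by positivity)
    (by rwa [Ne, div_eq_one_iff_eq (by positivity)])
  rw [log_div hx.ne' (by positivity)] at h
  have e : u * (x / (u / s) - 1) = s * x - u := by field_simp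
  linarith [mul_lt_mul_of_pos_left h hu]

lemma cellScore_le_cellScore_self {p q u v : ℝ} (hp : 0 < p) (hq : 0 < q) (hu : 0 < u)
    (hv : 0 < v) : cellScore p q u v ≤ cellScore u v u v := by
  have hp' := mul_log_sub_mul_log_le hu (add_pos hu hv) (div_pos hp (add_pos hp hq))
  have hq' := mul_log_sub_mul_log_le hv (add_pos hu hv) (div_pos hq (add_pos hp hq))
  have hsum : (u + v) * (p / (p + q)) + (u + v) * (q / (p + q)) = u + v := by
    field_simp
  simp only [cellScore]
  linarith

lemma cellScore_lt_cellScore_self {p q u v : ℝ} (hp : 0 < p) (hq : 0 < q) (hu : 0 < u)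
    (hv : 0 < v) (hne : u / v ≠ p / q) : cellScore p q u v < cellScore u v u v := by
  have hne' : p / (p + q) ≠ u / (u + v) := by
    contrapose! hne
    rw [div_eq_div_iff (by positivity) (by positivity)] at hne ⊢
    linarith
  have hp' := mul_log_sub_mul_log_lt hu (add_pos hu hv) (div_pos hp (add_pos hp hq)) hne'
  have hq' := mul_log_sub_mul_log_le hv (add_pos hu hv) (div_pos hq (add_pos hp hq))
  have hsum : (u + v) * (p / (p + q)) + (u + v) * (q / (p + q)) = u + v := by
    field_simp
  simp only [cellScore]
  linarith

lemma iota0_eq_cellScore_add {C B c b c' b' : ℝ} (hC : C = c + c') (hB : B = b + b') :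
    iota0 C B c b = cellScore c b c b + cellScore c' b' c' b' := by
  subst hC hB
  simp only [iota0, cellScore, add_sub_cancel_left]
  ring

lemma cellScore_add_cellScore_le_iota0 {C B c b c' b' p q p' q' : ℝ} (hC : C = c + c')
    (hB : B = b + b') (hc : 0 < c) (hb : 0 < b) (hc' : 0 < c') (hb' : 0 < b') (hp : 0 < p)
    (hq : 0 < q) (hp' : 0 < p') (hq' : 0 < q') :
    cellScore p q c b + cellScore p' q' c' b' ≤ iota0 C B c b := by
  rw [iota0_eq_cellScore_add hC hB]
  exact add_le_add (cellScore_le_cellScore_self hp hq hc hb)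
    (cellScore_le_cellScore_self hp' hq' hc' hb')

lemma cellScore_add_cellScore_lt_iota0 {C B c b c' b' p q p' q' : ℝ} (hC : C = c + c')
    (hB : B = b + b') (hc : 0 < c) (hb : 0 < b) (hc' : 0 < c') (hb' : 0 < b') (hp : 0 < p)
    (hq : 0 < q) (hp' : 0 < p') (hq' : 0 < q') (hne : c / b ≠ p / q ∨ c' / b' ≠ p' / q') :
    cellScore p q c b + cellScore p' q' c' b' < iota0 C B c b := by
  rw [iota0_eq_cellScore_add hC hB]
  rcases hne with hne | hne
  · exact add_lt_add_of_lt_of_le (cellScore_lt_cellScore_self hp hq hc hb hne)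
      (cellScore_le_cellScore_self hp' hq' hc' hb')
  · exact add_lt_add_of_le_of_lt (cellScore_le_cellScore_self hp hq hc hb)
      (cellScore_lt_cellScore_self hp' hq' hc' hb' hne)

lemma affine_sign_crossing {α β r₁ r₂ r₃ r₄ : ℝ} (h12 : r₁ < r₂) (h23 : r₂ < r₃) (h34 : r₃ < r₄)
    (h₂ : α * r₂ + β < 0) (h₃ : 0 < α * r₃ + β) : α * r₁ + β < 0 ∧ 0 < α * r₄ + β := by
  have hα : 0 < α := by nlinarith
  constructor <;> nlinarith

lemma cellScore_single_crossing (p q p' q' : ℝ) {c₁ b₁ c₂ b₂ c₃ b₃ c₄ b₄ : ℝ}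
    (hb₁ : 0 < b₁) (hb₂ : 0 < b₂) (hb₃ : 0 < b₃) (hb₄ : 0 < b₄)
    (h12 : c₁ / b₁ < c₂ / b₂) (h23 : c₂ / b₂ < c₃ / b₃) (h34 : c₃ / b₃ < c₄ / b₄)
    (h₂ : cellScore p q c₂ b₂ < cellScore p' q' c₂ b₂)
    (h₃ : cellScore p' q' c₃ b₃ < cellScore p q c₃ b₃) :
    cellScore p q c₁ b₁ < cellScore p' q' c₁ b₁ ∧ cellScore p' q' c₄ b₄ < cellScore p q c₄ b₄ := by
  -- by homogeneity, the preference of an output for the first cell is its `b` times an affine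
  -- function of its likelihood ratio `c / b`
  set α := log (p / (p + q)) - log (p' / (p' + q'))
  set β := log (q / (p + q)) - log (q' / (p' + q'))
  have hpref : ∀ c {b : ℝ}, 0 < b →
      cellScore p q c b - cellScore p' q' c b = b * (α * (c / b) + β) := by
    intro c b hb
    simp only [cellScore, α, β]
    field_simp
    ring
  have key := affine_sign_crossing (α := α) (β := β) h12 h23 h34
    (neg_of_mul_neg_right (by linarith [hpref c₂ hb₂]) hb₂.le)
    (pos_of_mul_pos_right (by linarith [hpref c₃ hb₃]) hb₃.le)
  constructor
  · linarith [hpref c₁ hb₁, mul_neg_of_pos_of_neg hb₁ key.1]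
  · linarith [hpref c₄ hb₄, mul_pos hb₄ key.2]

lemma lt_max_of_single_crossing (x y : ℝ → ℝ → ℝ) {c₁ b₁ c₂ b₂ c₃ b₃ c₄ b₄ Q P₁ P₂ P₃ : ℝ}
    (hQ : Q = x c₁ b₁ + x c₃ b₃ + (y c₂ b₂ + y c₄ b₄))
    (h₁ : x c₁ b₁ + (y c₂ b₂ + y c₃ b₃ + y c₄ b₄) < P₁)
    (h₂ : y c₁ b₁ + y c₂ b₂ + (x c₃ b₃ + x c₄ b₄) ≤ P₂)
    (h₃ : x c₁ b₁ + x c₂ b₂ + x c₃ b₃ + y c₄ b₄ < P₃)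
    (hcross : x c₂ b₂ < y c₂ b₂ → y c₃ b₃ < x c₃ b₃ →
      x c₁ b₁ < y c₁ b₁ ∧ y c₄ b₄ < x c₄ b₄) :
    Q < max P₁ (max P₂ P₃) := by
  by_cases h₃' : x c₃ b₃ ≤ y c₃ b₃
  · exact lt_max_of_lt_left (by linarith)
  by_cases h₂' : y c₂ b₂ ≤ x c₂ b₂
  · exact lt_max_of_lt_right (lt_max_of_lt_right (by linarith))
  obtain ⟨h₁', h₄'⟩ := hcross (not_le.mp h₂') (not_le.mp h₃')
  exact lt_max_of_lt_right (lt_max_of_lt_left (by linarith))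

/-- For `I' = 4` sorted outputs, the odd-even assignment `{1,3} | {2,4}` has strictly
smaller partial mutual information than at least one consecutive assignment. -/
theorem odd_even_four_suboptimal (c₁ b₁ c₂ b₂ c₃ b₃ c₄ b₄ : ℝ)
    (hc₁ : 0 < c₁) (hb₁ : 0 < b₁) (hc₂ : 0 < c₂) (hb₂ : 0 < b₂)
    (hc₃ : 0 < c₃) (hb₃ : 0 < b₃) (hc₄ : 0 < c₄) (hb₄ : 0 < b₄)
    (h12 : c₁ / b₁ < c₂ / b₂) (h23 : c₂ / b₂ < c₃ / b₃) (h34 : c₃ / b₃ < c₄ / b₄) :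
    iota0 (c₁ + c₂ + c₃ + c₄) (b₁ + b₂ + b₃ + b₄) (c₁ + c₃) (b₁ + b₃)
      < max (iota0 (c₁ + c₂ + c₃ + c₄) (b₁ + b₂ + b₃ + b₄) c₁ b₁)
          (max (iota0 (c₁ + c₂ + c₃ + c₄) (b₁ + b₂ + b₃ + b₄) (c₁ + c₂) (b₁ + b₂))
            (iota0 (c₁ + c₂ + c₃ + c₄) (b₁ + b₂ + b₃ + b₄)
              (c₁ + c₂ + c₃) (b₁ + b₂ + b₃))) := by
  have hr₁₃ := div_lt_add_div_add hb₁ hb₃ (h12.trans h23)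
  have hr₂₄ := add_div_add_lt_div hb₂ hb₄ (h23.trans h34)
  refine lt_max_of_single_crossing (cellScore (c₁ + c₃) (b₁ + b₃)) (cellScore (c₂ + c₄) (b₂ + b₄))
    ?_ ?_ ?_ ?_ (cellScore_single_crossing _ _ _ _ hb₁ hb₂ hb₃ hb₄ h12 h23 h34)
  · rw [iota0_eq_cellScore_add (c' := c₂ + c₄) (b' := b₂ + b₄) (by ring) (by ring),
      cellScore_add, cellScore_add]
  · rw [← cellScore_add, ← cellScore_add]
    refine cellScore_add_cellScore_lt_iota0 (by ring) (by ring) ?_ ?_ ?_ ?_ ?_ ?_ ?_ ?_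
      (.inl hr₁₃.ne) <;> positivity
  · rw [← cellScore_add, ← cellScore_add]
    refine cellScore_add_cellScore_le_iota0 (by ring) (by ring) ?_ ?_ ?_ ?_ ?_ ?_ ?_ ?_ <;>
      positivity
  · rw [← cellScore_add, ← cellScore_add]
    refine cellScore_add_cellScore_lt_iota0 (by ring) (by ring) ?_ ?_ ?_ ?_ ?_ ?_ ?_ ?_
      (.inr hr₂₄.ne') <;> positivity
end

section
/- Optimality of a consecutive partition for binary-input channel quantization: when the I channel outputs are sorted so that P(1|1)/P(1|2) < P(2|1)/P(2|2) < ⋯ < P(I|1)/P(I|2), every quantizer maximizing I(X;Z) over deterministic K-level quantizers partitions {1,…,I} into K intervals of consecutive outputs. -/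
/-!
Write `I(X;Z) = ∑ₖ F(Tₖ)`, where `Tₖ = ∑_{f i = k} P i` is the likelihood vector of cell `k` and
`F(a) = ∑ⱼ pⱼ aⱼ log (aⱼ / p ⬝ a)`. The function `F` is 1-homogeneous, so with `g = ∇F` we have
`F(a) = a ⬝ g(a)`, and `F(a') - a' ⬝ g(a)` is `(p ⬝ a')` times a Kullback–Leibler divergence
between posteriors: it is nonnegative and vanishes only when `a'` is proportional to `a`.
Moving output `i` from cell `A` to cell `B` therefore changes `I(X;Z)` by at least
`P i ⬝ (g B - g A)`, so at an optimum every output scores its own cell highest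
(for a singleton cell this is Gibbs' inequality directly).

If `i₁ < i₂ < i₃` with `i₁, i₃ ∈ A` and `i₂ ∈ B ≠ A`, then `d = g B - g A` satisfies
`P i₁ ⬝ d ≤ 0`, `P i₂ ⬝ d ≥ 0`, `P i₃ ⬝ d ≤ 0`; as `P i₂` lies strictly inside the cone spanned by
`P i₁` and `P i₃`, this forces `d = 0`. Then moving `i₁` or `i₃` to `B` costs nothing, which by
the equality case makes both proportional to `T_B`,
contradicting `P i₁ 0 / P i₁ 1 < P i₃ 0 / P i₃ 1`.
-/

open Finset Real

/-- Mutual information of the channel induced by a deterministic quantizer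
`f : Fin I → Fin K`, with `T k j = ∑_{i : f i = k} P i j`. -/
noncomputable def quantMI (I K : ℕ) (p : Fin 2 → ℝ) (P : Fin I → Fin 2 → ℝ)
    (f : Fin I → Fin K) : ℝ :=
  ∑ k, ∑ j, p j * (∑ i ∈ Finset.univ.filter fun i => f i = k, P i j) *
    Real.log ((∑ i ∈ Finset.univ.filter fun i => f i = k, P i j) /
      ∑ j', p j' * (∑ i ∈ Finset.univ.filter fun i => f i = k, P i j'))

open InformationTheory Function

section CellInfo

variable {J : Type*} [Fintype J]

noncomputable def cellInfo (p a : J → ℝ) : ℝ :=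
  ∑ j, p j * a j * log (a j / (p ⬝ᵥ a))

/-- The gradient of `cellInfo p`, which is 1-homogeneous; `cellInfoGap p a` is therefore its
Bregman divergence at `a`. -/
noncomputable def cellInfoGrad (p a : J → ℝ) (j : J) : ℝ :=
  p j * log (a j / (p ⬝ᵥ a))

noncomputable def cellInfoGap (p a a' : J → ℝ) : ℝ :=
  cellInfo p a' - a' ⬝ᵥ cellInfoGrad p a

lemma cellInfo_eq_dotProduct_cellInfoGrad (p a : J → ℝ) :
    cellInfo p a = a ⬝ᵥ cellInfoGrad p a :=
  sum_congr rfl fun j _ => by rw [cellInfoGrad]; ring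

variable {p a a' : J → ℝ}

lemma dotProduct_pos_of_pos [Nonempty J] (hp : ∀ j, 0 < p j) (ha : ∀ j, 0 < a j) :
    0 < p ⬝ᵥ a :=
  sum_pos (fun j _ => mul_pos (hp j) (ha j)) univ_nonempty

lemma cellInfoGap_eq_mul_sum_klFun [Nonempty J] (hp : ∀ j, 0 < p j) (ha : ∀ j, 0 < a j)
    (ha' : ∀ j, 0 < a' j) :
    cellInfoGap p a a' = (p ⬝ᵥ a') *
      ∑ j, p j * (a j / (p ⬝ᵥ a)) * klFun ((a' j / (p ⬝ᵥ a')) / (a j / (p ⬝ᵥ a))) := by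
  have hc := dotProduct_pos_of_pos hp ha
  have hc' := dotProduct_pos_of_pos hp ha'
  have hterm : ∀ j, p j * a' j * log (a' j / (p ⬝ᵥ a')) - a' j * cellInfoGrad p a j
      = (p ⬝ᵥ a') * (p j * (a j / (p ⬝ᵥ a)) * klFun ((a' j / (p ⬝ᵥ a')) / (a j / (p ⬝ᵥ a))))
        + (p j * a' j - (p ⬝ᵥ a') / (p ⬝ᵥ a) * (p j * a j)) := by
    intro j
    have hu := div_pos (ha j) hc
    have hu' := div_pos (ha' j) hc'
    have haj := (ha j).ne'
    rw [cellInfoGrad, klFun_apply, log_div hu'.ne' hu.ne']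
    field_simp
    ring
  have hrest : ∑ j, (p j * a' j - (p ⬝ᵥ a') / (p ⬝ᵥ a) * (p j * a j)) = 0 := by
    rw [sum_sub_distrib, ← mul_sum]
    exact sub_eq_zero.mpr (div_mul_cancel₀ _ hc.ne').symm
  rw [cellInfoGap, cellInfo, dotProduct.eq_1 a', ← sum_sub_distrib,
    sum_congr rfl fun j _ => hterm j, sum_add_distrib, hrest, add_zero, mul_sum]

lemma cellInfoGap_nonneg [Nonempty J] (hp : ∀ j, 0 < p j) (ha : ∀ j, 0 < a j)
    (ha' : ∀ j, 0 < a' j) : 0 ≤ cellInfoGap p a a' := by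
  have hc := dotProduct_pos_of_pos hp ha
  have hc' := dotProduct_pos_of_pos hp ha'
  rw [cellInfoGap_eq_mul_sum_klFun hp ha ha']
  exact mul_nonneg hc'.le (sum_nonneg fun j _ => mul_nonneg (mul_pos (hp j) (div_pos (ha j) hc)).le
    (klFun_nonneg (div_pos (div_pos (ha' j) hc') (div_pos (ha j) hc)).le))

lemma exists_eq_smul_of_cellInfoGap_eq_zero [Nonempty J] (hp : ∀ j, 0 < p j)
    (ha : ∀ j, 0 < a j) (ha' : ∀ j, 0 < a' j) (h : cellInfoGap p a a' = 0) :
    ∃ t : ℝ, a' = t • a := by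
  have hc := dotProduct_pos_of_pos hp ha
  have hc' := dotProduct_pos_of_pos hp ha'
  rw [cellInfoGap_eq_mul_sum_klFun hp ha ha', mul_eq_zero, or_iff_right hc'.ne',
    sum_eq_zero_iff_of_nonneg] at h
  · refine ⟨(p ⬝ᵥ a') / (p ⬝ᵥ a), funext fun j => ?_⟩
    have hu := div_pos (ha j) hc
    have hkl := (mul_eq_zero.mp (h j (mem_univ j))).resolve_left (mul_pos (hp j) hu).ne'
    rw [klFun_eq_zero_iff (div_pos (div_pos (ha' j) hc') hu).le, div_eq_one_iff_eq hu.ne'] at hkl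
    rw [Pi.smul_apply, smul_eq_mul]
    field_simp at hkl ⊢
    linarith
  · intro j _
    exact mul_nonneg (mul_pos (hp j) (div_pos (ha j) hc)).le
      (klFun_nonneg (div_pos (div_pos (ha' j) hc') (div_pos (ha j) hc)).le)

end CellInfo

section Quantizer

variable {ι κ J : Type*} [Fintype ι] [DecidableEq κ]

noncomputable def cellMass (P : ι → J → ℝ) (f : ι → κ) (k : κ) : J → ℝ :=
  ∑ i ∈ univ.filter fun i => f i = k, P i

noncomputable def quantizerInfo [Fintype κ] [Fintype J] (p : J → ℝ) (P : ι → J → ℝ)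
    (f : ι → κ) : ℝ :=
  ∑ k, cellInfo p (cellMass P f k)

lemma quantMI_eq_quantizerInfo (I K : ℕ) (p : Fin 2 → ℝ) (P : Fin I → Fin 2 → ℝ)
    (f : Fin I → Fin K) : quantMI I K p P f = quantizerInfo p P f := by
  simp only [quantMI, quantizerInfo, cellInfo, cellMass, Finset.sum_apply, dotProduct]

variable {P : ι → J → ℝ} {f : ι → κ}

lemma cellMass_pos (hP : ∀ i j, 0 < P i j) {k : κ} (hk : ∃ i, f i = k) (j : J) :
    0 < cellMass P f k j := by
  obtain ⟨i, hi⟩ := hk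
  rw [cellMass, Finset.sum_apply]
  exact sum_pos (fun i _ => hP i j) ⟨i, by simp [hi]⟩

lemma cellMass_eq_of_forall_eq {i : ι} (h : ∀ i', f i' = f i → i' = i) :
    cellMass P f (f i) = P i := by
  have : (univ.filter fun x => f x = f i) = {i} :=
    eq_singleton_iff_unique_mem.mpr ⟨by simp, fun x hx => h x (by simpa using hx)⟩
  rw [cellMass, this, sum_singleton]

variable [DecidableEq ι] {i : ι} {k : κ}

lemma cellMass_update_source (hk : f i ≠ k) :
    cellMass P (update f i k) (f i) = cellMass P f (f i) - P i := by
  have : (univ.filter fun x => update f i k x = f i) =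
      (univ.filter fun x => f x = f i).erase i := by
    ext x
    rcases eq_or_ne x i with rfl | hx <;> simp [*, Ne.symm hk]
  rw [cellMass, this, cellMass, ← sum_erase_add _ _ (by simp : i ∈ univ.filter fun x => f x = f i),
    add_sub_cancel_right]

lemma cellMass_update_target (hk : f i ≠ k) :
    cellMass P (update f i k) k = cellMass P f k + P i := by
  have : (univ.filter fun x => update f i k x = k) = insert i (univ.filter fun x => f x = k) := by
    ext x
    rcases eq_or_ne x i with rfl | hx <;> simp [*]
  rw [cellMass, this, sum_insert (by simp [hk]), add_comm, cellMass]

lemma cellMass_update_of_ne {m : κ} (hm : m ≠ f i) (hm' : m ≠ k) :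
    cellMass P (update f i k) m = cellMass P f m := by
  refine sum_congr (filter_congr fun x _ => ?_) fun _ _ => rfl
  rcases eq_or_ne x i with rfl | hx <;> simp [*, Ne.symm hm, Ne.symm hm']

end Quantizer

lemma quantizerInfo_update_sub {ι κ J : Type*} [Fintype ι] [Fintype κ] [Fintype J]
    [DecidableEq ι] [DecidableEq κ] (p : J → ℝ) (P : ι → J → ℝ) (f : ι → κ) {i : ι} {k : κ}
    (hk : f i ≠ k) :
    quantizerInfo p P (update f i k) - quantizerInfo p P f =
      cellInfoGap p (cellMass P f (f i)) (cellMass P f (f i) - P i)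
        + cellInfoGap p (cellMass P f k) (cellMass P f k + P i)
        + P i ⬝ᵥ (cellInfoGrad p (cellMass P f k) - cellInfoGrad p (cellMass P f (f i))) := by
  rw [quantizerInfo, quantizerInfo, ← sum_sub_distrib,
    Fintype.sum_eq_add (f i) k hk fun m hm => by rw [cellMass_update_of_ne hm.1 hm.2, sub_self],
    cellMass_update_source hk, cellMass_update_target hk, cellInfoGap, cellInfoGap,
    cellInfo_eq_dotProduct_cellInfoGrad p (cellMass P f (f i)),
    cellInfo_eq_dotProduct_cellInfoGrad p (cellMass P f k), sub_dotProduct, add_dotProduct,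
    dotProduct_sub]
  ring

lemma Function.Surjective.update_of_eq {α β : Type*} [DecidableEq α] {f : α → β}
    (hf : Surjective f) {a a' : α} (ha' : a' ≠ a) (hfa' : f a' = f a) (b : β) :
    Surjective (update f a b) := by
  intro y
  by_cases hy : y = b
  · exact ⟨a, by simp [hy]⟩
  obtain ⟨x, rfl⟩ := hf y
  rcases eq_or_ne x a with rfl | hx
  · exact ⟨a', by rw [update_of_ne ha', hfa']⟩
  · exact ⟨x, update_of_ne hx _ _⟩

section Optimal

variable {ι κ J : Type*} [Fintype ι] [Fintype κ] [Fintype J] [Nonempty J]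
  [DecidableEq ι] [DecidableEq κ] {p : J → ℝ} {P : ι → J → ℝ} {f : ι → κ}

lemma dotProduct_cellInfoGrad_add_cellInfoGap_le (hp : ∀ j, 0 < p j) (hP : ∀ i j, 0 < P i j)
    (hf : Surjective f)
    (hopt : ∀ g : ι → κ, Surjective g → quantizerInfo p P g ≤ quantizerInfo p P f)
    {i i' : ι} (hi' : i' ≠ i) (hfi' : f i' = f i) {k : κ} (hk : f i ≠ k) :
    P i ⬝ᵥ cellInfoGrad p (cellMass P f k) + cellInfoGap p (cellMass P f k) (cellMass P f k + P i)
      ≤ P i ⬝ᵥ cellInfoGrad p (cellMass P f (f i)) := by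
  have hg := hf.update_of_eq hi' hfi' k
  have hA : ∀ j, 0 < (cellMass P f (f i) - P i) j := fun j => by
    rw [← cellMass_update_source hk]
    exact cellMass_pos hP (hg _) j
  have hgap := cellInfoGap_nonneg hp (cellMass_pos (f := f) hP ⟨i, rfl⟩) hA
  have hmove := quantizerInfo_update_sub p P f hk
  rw [dotProduct_sub] at hmove
  linarith [hopt _ hg]

lemma dotProduct_cellInfoGrad_le_of_optimal (hp : ∀ j, 0 < p j) (hP : ∀ i j, 0 < P i j)
    (hf : Surjective f)
    (hopt : ∀ g : ι → κ, Surjective g → quantizerInfo p P g ≤ quantizerInfo p P f)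
    (i : ι) (k : κ) :
    P i ⬝ᵥ cellInfoGrad p (cellMass P f k) ≤ P i ⬝ᵥ cellInfoGrad p (cellMass P f (f i)) := by
  have hB := cellMass_pos hP (hf k)
  rcases eq_or_ne (f i) k with rfl | hk
  · exact le_rfl
  by_cases hsingle : ∀ i', f i' = f i → i' = i
  · rw [cellMass_eq_of_forall_eq hsingle, ← cellInfo_eq_dotProduct_cellInfoGrad, ← sub_nonneg]
    exact cellInfoGap_nonneg hp hB (hP i)
  push Not at hsingle
  obtain ⟨i', hfi', hi'⟩ := hsingle
  have hgap : 0 ≤ cellInfoGap p (cellMass P f k) (cellMass P f k + P i) :=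
    cellInfoGap_nonneg hp hB fun j => add_pos (hB j) (hP i j)
  linarith [dotProduct_cellInfoGrad_add_cellInfoGap_le hp hP hf hopt hi' hfi' hk]

lemma exists_eq_smul_cellMass_of_dotProduct_cellInfoGrad_eq (hp : ∀ j, 0 < p j)
    (hP : ∀ i j, 0 < P i j) (hf : Surjective f)
    (hopt : ∀ g : ι → κ, Surjective g → quantizerInfo p P g ≤ quantizerInfo p P f)
    {i i' : ι} (hi' : i' ≠ i) (hfi' : f i' = f i) {k : κ} (hk : f i ≠ k)
    (heq : P i ⬝ᵥ cellInfoGrad p (cellMass P f k) = P i ⬝ᵥ cellInfoGrad p (cellMass P f (f i))) :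
    ∃ t : ℝ, P i = t • cellMass P f k := by
  have hB := cellMass_pos hP (hf k)
  have hBP : ∀ j, 0 < (cellMass P f k + P i) j := fun j => add_pos (hB j) (hP i j)
  have hgap := cellInfoGap_nonneg hp hB hBP
  have hmove := dotProduct_cellInfoGrad_add_cellInfoGap_le hp hP hf hopt hi' hfi' hk
  obtain ⟨t, ht⟩ := exists_eq_smul_of_cellInfoGap_eq_zero hp hB hBP (by linarith)
  exact ⟨t - 1, by rw [sub_smul, one_smul, ← ht, add_sub_cancel_left]⟩

end Optimal

lemma div_eq_div_of_eq_smul {J : Type*} {v w : J → ℝ} {t : ℝ} (h : v = t • w) {j j' : J}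
    (hv : v j' ≠ 0) : v j / v j' = w j / w j' := by
  subst h
  have ht : t ≠ 0 := left_ne_zero_of_mul hv
  simp only [Pi.smul_apply, smul_eq_mul, mul_div_mul_left _ _ ht]

lemma eq_zero_of_dotProduct_nonpos_nonneg_nonpos {x y z d : Fin 2 → ℝ}
    (hx : 0 < x 1) (hy : 0 < y 1) (hz : 0 < z 1)
    (hxy : x 0 / x 1 < y 0 / y 1) (hyz : y 0 / y 1 < z 0 / z 1)
    (hxd : x ⬝ᵥ d ≤ 0) (hyd : 0 ≤ y ⬝ᵥ d) (hzd : z ⬝ᵥ d ≤ 0) : d = 0 := by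
  -- `v ⬝ d` has the sign of the affine map `r ↦ r * d 0 + d 1` at `r = v 0 / v 1`.
  have affine : ∀ v : Fin 2 → ℝ, 0 < v 1 → v ⬝ᵥ d = v 1 * (v 0 / v 1 * d 0 + d 1) := by
    intro v hv
    rw [dotProduct, Fin.sum_univ_two]
    field_simp
  rw [affine x hx] at hxd
  rw [affine y hy] at hyd
  rw [affine z hz] at hzd
  have φx := nonpos_of_mul_nonpos_right hxd hx
  have φy := nonneg_of_mul_nonneg_right hyd hy
  have φz := nonpos_of_mul_nonpos_right hzd hz
  have hd0 : d 0 = 0 := by nlinarith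
  have hd1 : d 1 = 0 := by rw [hd0] at φx φy; linarith
  ext j
  fin_cases j <;> simp [hd0, hd1]

theorem optimal_quantizer_consecutive_general (I K : ℕ) (p : Fin 2 → ℝ)
    (hp : ∀ j, 0 < p j)
    (P : Fin I → Fin 2 → ℝ) (hPpos : ∀ i j, 0 < P i j)
    (hsort : ∀ i i' : Fin I, i < i' → P i 0 / P i 1 < P i' 0 / P i' 1)
    (f : Fin I → Fin K) (hf : Function.Surjective f)
    (hopt : ∀ g : Fin I → Fin K, Function.Surjective g →
      quantMI I K p P g ≤ quantMI I K p P f) :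
    ∀ i₁ i₂ i₃ : Fin I, i₁ ≤ i₂ → i₂ ≤ i₃ → f i₁ = f i₃ → f i₂ = f i₁ := by
  intro i₁ i₂ i₃ h12 h23 h13
  by_contra hne
  have h12' : i₁ < i₂ := h12.lt_of_ne (by rintro rfl; exact hne rfl)
  have h23' : i₂ < i₃ := h23.lt_of_ne (by rintro rfl; exact hne h13.symm)
  simp only [quantMI_eq_quantizerInfo] at hopt
  have hscore := dotProduct_cellInfoGrad_le_of_optimal hp hPpos hf hopt
  have hgrad : cellInfoGrad p (cellMass P f (f i₂)) - cellInfoGrad p (cellMass P f (f i₁)) = 0 :=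
    eq_zero_of_dotProduct_nonpos_nonneg_nonpos (hPpos i₁ 1) (hPpos i₂ 1) (hPpos i₃ 1)
      (hsort _ _ h12') (hsort _ _ h23')
      (by rw [dotProduct_sub]; linarith [hscore i₁ (f i₂)])
      (by rw [dotProduct_sub]; linarith [hscore i₂ (f i₁)])
      (by rw [dotProduct_sub, h13]; linarith [hscore i₃ (f i₂)])
  rw [sub_eq_zero] at hgrad
  obtain ⟨t₁, ht₁⟩ := exists_eq_smul_cellMass_of_dotProduct_cellInfoGrad_eq hp hPpos hf hopt
    (h12'.trans h23').ne' h13.symm (Ne.symm hne) (by rw [hgrad])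
  obtain ⟨t₃, ht₃⟩ := exists_eq_smul_cellMass_of_dotProduct_cellInfoGrad_eq hp hPpos hf hopt
    (h12'.trans h23').ne h13 (h13 ▸ Ne.symm hne) (by rw [← h13, hgrad])
  have hlt := hsort _ _ (h12'.trans h23')
  rw [div_eq_div_of_eq_smul ht₁ (hPpos i₁ 1).ne', div_eq_div_of_eq_smul ht₃ (hPpos i₃ 1).ne']
    at hlt
  exact lt_irrefl _ hlt

/-- When the channel outputs are sorted by strictly increasing likelihood ratios,
every deterministic `K`-level quantizer maximizing `I(X;Z)` has preimages consisting
of consecutive outputs, i.e. it partitions the outputs into `K` intervals. -/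
theorem optimal_quantizer_consecutive (I K : ℕ) (p : Fin 2 → ℝ)
    (hp : ∀ j, 0 < p j) (hpsum : ∑ j, p j = 1)
    (P : Fin I → Fin 2 → ℝ) (hPpos : ∀ i j, 0 < P i j) (hPsum : ∀ j, ∑ i, P i j = 1)
    (hsort : ∀ i i' : Fin I, i < i' → P i 0 / P i 1 < P i' 0 / P i' 1)
    (f : Fin I → Fin K) (hf : Function.Surjective f)
    (hopt : ∀ g : Fin I → Fin K, Function.Surjective g →
      quantMI I K p P g ≤ quantMI I K p P f) :
    ∀ i₁ i₂ i₃ : Fin I, i₁ ≤ i₂ → i₂ ≤ i₃ → f i₁ = f i₃ → f i₂ = f i₁ :=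
  optimal_quantizer_consecutive_general I K p hp P hPpos hsort f hf hopt
end
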